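/- arXiv:1802.07222 — 4 statements merged into one kernel-verified Lean document; each statement's English description precedes it below -/
import Mathlib

section
/- In a Clos topology with n0 ≥ n2 and npod ≥ 1 + n2(n0-1)/(n0(n0-n2)) (and n0 > n2), the minimum of the two link-traversal probabilities 1/(n0*n1*npod) (level-1) and (1/(n1*n2*npod)) * (n0(npod-1)/(n0*npod-1)) (level-2) is attained by the level-1 expression; i.e., 1/(n0*n1*npod) ≤ (1/(n1*n2*npod)) * (n0(npod-1)/(n0*npod-1)). -/
/-! After cancelling the common factor `1 / (n1 * npod)`, the claim reads
`1 / n0 ≤ (1 / n2) * n0 (npod - 1) / (n0 npod - 1)`, i.e. `n2 (n0 npod - 1) ≤ n0² (npod - 1)`,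
and clearing denominators in the hypothesis on `npod` gives exactly this inequality. -/

section

variable {K : Type*} [Field K] [LinearOrder K] [IsStrictOrderedRing K] {a c p : K}

theorem one_add_div_le_iff_mul_le (hc : 0 < c) (hca : c < a) :
    1 + c * (a - 1) / (a * (a - c)) ≤ p ↔ c * (a * p - 1) ≤ a ^ 2 * (p - 1) := by
  have hD : 0 < a * (a - c) := mul_pos (hc.trans hca) (sub_pos.mpr hca)
  rw [← le_sub_iff_add_le', div_le_iff₀ hD]
  constructor <;> intro h <;> linarith

theorem level1_factor_le_level2_factor (hc : 1 ≤ c) (hca : c < a)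
    (hp : 1 + c * (a - 1) / (a * (a - c)) ≤ p) :
    1 / a ≤ 1 / c * (a * (p - 1) / (a * p - 1)) := by
  have ha : 1 < a := hc.trans_lt hca
  have hp1 : 1 < p := by
    refine lt_of_lt_of_le (lt_add_of_pos_right 1 ?_) hp
    exact div_pos (by nlinarith) (mul_pos (by linarith) (sub_pos.mpr hca))
  have hap : 0 < a * p - 1 := by nlinarith
  rw [one_div_mul_eq_div, div_div, div_le_div_iff₀ (by linarith) (by positivity)]
  linarith [(one_add_div_le_iff_mul_le (by linarith) hca).mp hp]

end

theorem level1_prob_is_min_general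
    (n0 n1 n2 npod : ℕ)
    (h2 : 1 ≤ n2) (h02 : n2 < n0)
    (hpod : (npod : ℝ) ≥ 1 + (n2 : ℝ) * ((n0 : ℝ) - 1) / ((n0 : ℝ) * ((n0 : ℝ) - n2))) :
    1 / ((n0 : ℝ) * n1 * npod)
      ≤ (1 / ((n1 : ℝ) * n2 * npod)) *
        (((n0 : ℝ) * ((npod : ℝ) - 1)) / ((n0 : ℝ) * npod - 1)) := by
  have key := level1_factor_le_level2_factor (by exact_mod_cast h2) (by exact_mod_cast h02) hpod
  calc 1 / ((n0 : ℝ) * n1 * npod) = 1 / ((n1 : ℝ) * npod) * (1 / n0) := by ring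
    _ ≤ 1 / ((n1 : ℝ) * npod) * (1 / n2 * (n0 * (npod - 1) / (n0 * npod - 1))) :=
      mul_le_mul_of_nonneg_left key (by positivity)
    _ = _ := by ring

/-- In a Clos topology with `n0 > n2` and
`npod ≥ 1 + n2(n0-1)/(n0(n0-n2))`, the minimum of the level-1 and level-2
traversal probabilities is attained by the level-1 expression:
`1/(n0*n1*npod) ≤ (1/(n1*n2*npod)) * (n0(npod-1)/(n0*npod-1))`. -/
theorem level1_prob_is_min
    (n0 n1 n2 npod : ℕ)
    (h1 : 1 ≤ n1) (h2 : 1 ≤ n2) (h02 : n2 < n0) (hp : 2 ≤ npod)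
    (hpod : (npod : ℝ) ≥ 1 + (n2 : ℝ) * ((n0 : ℝ) - 1) / ((n0 : ℝ) * ((n0 : ℝ) - n2))) :
    1 / ((n0 : ℝ) * n1 * npod)
      ≤ (1 / ((n1 : ℝ) * n2 * npod)) *
        (((n0 : ℝ) * ((npod : ℝ) - 1)) / ((n0 : ℝ) * npod - 1)) :=
  level1_prob_is_min_general n0 n1 n2 npod h2 h02 hpod
end

section
/- In a Clos topology, the probability v_b that a bad link (one that causes a retransmission with probability r_b whenever a connection traverses it) receives a vote is at least r_b/(n0*n1*npod), provided n0 ≥ n2 and npod ≥ 1 + n2(n0-1)/(n0(n0-n2)). -/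
/-! Clearing denominators, the level-1 traversal probability `1/(n0 n1 npod)` is at most the
level-2 one exactly when `n2 (n0 npod - 1) ≤ n0² (npod - 1)`; writing
`n0 npod - 1 = n0 (npod - 1) + (n0 - 1)` this is the pod condition
`n2 (n0 - 1) ≤ (npod - 1) n0 (n0 - n2)`. So the minimum in the lower bound on `vb` is the
level-1 probability. -/

section ClosTraversal

variable {a b c p : ℝ}

lemma clos_pod_condition_iff (ha : 0 < a) (hca : c < a) :
    1 + c * (a - 1) / (a * (a - c)) ≤ p ↔ c * (a - 1) ≤ (p - 1) * (a * (a - c)) := by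
  rw [← le_sub_iff_add_le', div_le_iff₀ (mul_pos ha (sub_pos.mpr hca))]

lemma one_lt_of_clos_pod_condition (hc : 0 < c) (ha : 1 < a) (hca : c < a)
    (hpod : 1 + c * (a - 1) / (a * (a - c)) ≤ p) : 1 < p := by
  have : 0 < c * (a - 1) / (a * (a - c)) := by
    have := sub_pos.mpr ha
    have := sub_pos.mpr hca
    positivity
  linarith

lemma level1_traversal_le_level2_traversal (hb : 0 < b) (hc : 0 < c) (ha : 1 ≤ a) (hp : 1 < p)
    (hpod : c * (a - 1) ≤ (p - 1) * (a * (a - c))) :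
    1 / (a * b * p) ≤ 1 / (b * c * p) * (a * (p - 1) / (a * p - 1)) := by
  have hp0 : 0 < p := by linarith
  have hap : 0 < a * p - 1 := by nlinarith
  have hcleared : c * (a * p - 1) ≤ a * (a * (p - 1)) := by nlinarith
  rw [div_mul_div_comm, one_mul, div_le_div_iff₀ (by positivity) (by positivity)]
  calc 1 * (b * c * p * (a * p - 1)) = b * p * (c * (a * p - 1)) := by ring
    _ ≤ b * p * (a * (a * (p - 1))) := by gcongr
    _ = a * (p - 1) * (a * b * p) := by ring

end ClosTraversal

theorem bad_link_vote_lower_bound_general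
    (n0 n1 n2 npod : ℕ)
    (h1 : 1 ≤ n1) (h2 : 1 ≤ n2) (h02 : n2 < n0)
    (hpod : (npod : ℝ) ≥ 1 + (n2 : ℝ) * ((n0 : ℝ) - 1) / ((n0 : ℝ) * ((n0 : ℝ) - n2)))
    (rb vb : ℝ)
    (hvb : vb ≥ min (1 / ((n0 : ℝ) * n1 * npod))
        ((1 / ((n1 : ℝ) * n2 * npod)) *
          (((n0 : ℝ) * ((npod : ℝ) - 1)) / ((n0 : ℝ) * npod - 1))) * rb) :
    vb ≥ rb / ((n0 : ℝ) * n1 * npod) := by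
  have hb : (0 : ℝ) < n1 := by exact_mod_cast h1
  have hc : (0 : ℝ) < n2 := by exact_mod_cast h2
  have hca : (n2 : ℝ) < n0 := by exact_mod_cast h02
  have ha : (1 : ℝ) < n0 := by linarith [(Nat.one_le_cast.mpr h2 : (1 : ℝ) ≤ n2)]
  have hp := one_lt_of_clos_pod_condition hc ha hca hpod
  have hle := level1_traversal_le_level2_traversal hb hc ha.le hp
    ((clos_pod_condition_iff (by linarith) hca).mp hpod)
  rwa [min_eq_left hle, one_div_mul_eq_div] at hvb

/-- In a Clos topology, the probability `vb` that a bad link (causing a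
retransmission with probability `rb` whenever a connection traverses it) receives
a vote is at least the minimum link-traversal probability times `rb`; under
`n0 > n2` and `npod ≥ 1 + n2(n0-1)/(n0(n0-n2))` this yields
`vb ≥ rb/(n0*n1*npod)`. -/
theorem bad_link_vote_lower_bound
    (n0 n1 n2 npod : ℕ)
    (h1 : 1 ≤ n1) (h2 : 1 ≤ n2) (h02 : n2 < n0) (hp : 2 ≤ npod)
    (hpod : (npod : ℝ) ≥ 1 + (n2 : ℝ) * ((n0 : ℝ) - 1) / ((n0 : ℝ) * ((n0 : ℝ) - n2)))
    (rb vb : ℝ) (hrb : 0 ≤ rb)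
    (hvb : vb ≥ min (1 / ((n0 : ℝ) * n1 * npod))
        ((1 / ((n1 : ℝ) * n2 * npod)) *
          (((n0 : ℝ) * ((npod : ℝ) - 1)) / ((n0 : ℝ) * npod - 1))) * rb) :
    vb ≥ rb / ((n0 : ℝ) * n1 * npod) :=
  bad_link_vote_lower_bound_general n0 n1 n2 npod h1 h2 h02 hpod rb vb hvb
end

section
/- Given the bounds v_b ≥ r_b/(n0*n1*npod) and v_g ≤ (1/(n1*n2*npod)) * (n0(npod-1)/(n0*npod-1)) * [(4 - k/n0) r_g + (k/n0) r_b], if r_b ≥ α r_g with α = n0(4n0 - k)(npod-1) / (n2(n0*npod - 1) - n0(npod-1)k) and k < n2(n0*npod-1)/(n0(npod-1)), then v_b ≥ v_g. -/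
/-!
Clearing the (positive) denominators turns `vg`'s upper bound being at most `vb`'s lower bound
into the linear inequality `n0 (npod - 1) (4 n0 - k) rg ≤ rb (n2 (n0 npod - 1) - n0 (npod - 1) k)`,
which is the hypothesis `rb ≥ α rg` multiplied by the denominator of `α`; that denominator is
positive precisely because of the bound on `k`.
-/

theorem sub_mul_pos_of_lt_div {K : Type*} [Field K] [LinearOrder K] [IsStrictOrderedRing K]
    {k x q : K} (hq : 0 < q) (hk : k < x / q) : 0 < x - q * k := by
  rw [lt_div_iff₀ hq] at hk
  linarith

theorem vote_bound_le_iff {n0 n1 n2 npod : ℝ} (a b k rg rb : ℝ)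
    (h0 : 0 < n0) (h1 : 0 < n1) (h2 : 0 < n2) (hp : 0 < npod) (hb : 0 < b) :
    1 / (n1 * n2 * npod) * (a / b) * ((4 - k / n0) * rg + k / n0 * rb) ≤ rb / (n0 * n1 * npod) ↔
      a * (4 * n0 - k) * rg ≤ rb * (n2 * b - a * k) := by
  have hlhs : 1 / (n1 * n2 * npod) * (a / b) * ((4 - k / n0) * rg + k / n0 * rb) =
      a * ((4 * n0 - k) * rg + k * rb) / (n0 * n1 * n2 * npod * b) := by
    field_simp
  have hrhs : rb / (n0 * n1 * npod) = rb * (n2 * b) / (n0 * n1 * n2 * npod * b) := by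
    field_simp
  rw [hlhs, hrhs, div_le_div_iff_of_pos_right (by positivity)]
  constructor <;> intro h <;> linarith

theorem snr_implies_ranking_general
    (n0 n1 n2 npod k : ℕ)
    (h0 : 1 ≤ n0) (h1 : 1 ≤ n1) (h2 : 1 ≤ n2) (hp : 2 ≤ npod)
    (rb rg vb vg : ℝ)
    (hk : (k : ℝ) < (n2 : ℝ) * ((n0 : ℝ) * npod - 1) / ((n0 : ℝ) * ((npod : ℝ) - 1)))
    (hvb : vb ≥ rb / ((n0 : ℝ) * n1 * npod))
    (hvg : vg ≤ (1 / ((n1 : ℝ) * n2 * npod)) *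
        (((n0 : ℝ) * ((npod : ℝ) - 1)) / ((n0 : ℝ) * npod - 1)) *
        ((4 - (k : ℝ) / n0) * rg + ((k : ℝ) / n0) * rb))
    (hsnr : rb ≥ ((n0 : ℝ) * (4 * (n0 : ℝ) - k) * ((npod : ℝ) - 1)) /
        ((n2 : ℝ) * ((n0 : ℝ) * npod - 1) - (n0 : ℝ) * ((npod : ℝ) - 1) * k) * rg) :
    vb ≥ vg := by
  have hn0 : (1 : ℝ) ≤ n0 := by exact_mod_cast h0
  have hnpod : (2 : ℝ) ≤ npod := by exact_mod_cast hp
  have hpods : (0 : ℝ) < n0 * ((npod : ℝ) - 1) := by nlinarith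
  have hlinks : (0 : ℝ) < n0 * npod - 1 := by nlinarith
  have hden := sub_mul_pos_of_lt_div hpods hk
  have hcleared : n0 * ((npod : ℝ) - 1) * (4 * n0 - k) * rg ≤
      rb * (n2 * (n0 * npod - 1) - n0 * ((npod : ℝ) - 1) * k) := by
    rw [ge_iff_le, div_mul_eq_mul_div, div_le_iff₀ hden] at hsnr
    linarith
  calc vg ≤ _ := hvg
    _ ≤ rb / ((n0 : ℝ) * n1 * npod) :=
      (vote_bound_le_iff _ _ _ _ _ (by positivity) (by positivity) (by positivity)
        (by positivity) hlinks).2 hcleared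
    _ ≤ vb := hvb

/-- Given the bounds `vb ≥ rb/(n0*n1*npod)` and
`vg ≤ (1/(n1*n2*npod)) * (n0(npod-1)/(n0*npod-1)) * [(4 - k/n0) rg + (k/n0) rb]`,
if `rb ≥ α rg` with `α = n0(4n0-k)(npod-1)/(n2(n0*npod-1) - n0(npod-1)k)` and
`k < n2(n0*npod-1)/(n0(npod-1))`, then `vb ≥ vg`. -/
theorem snr_implies_ranking
    (n0 n1 n2 npod k : ℕ)
    (h0 : 1 ≤ n0) (h1 : 1 ≤ n1) (h2 : 1 ≤ n2) (hp : 2 ≤ npod)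
    (rb rg vb vg : ℝ)
    (hrg0 : 0 ≤ rg) (hrg1 : rg ≤ 1) (hrb0 : 0 ≤ rb) (hrb1 : rb ≤ 1)
    (hk : (k : ℝ) < (n2 : ℝ) * ((n0 : ℝ) * npod - 1) / ((n0 : ℝ) * ((npod : ℝ) - 1)))
    (hvb : vb ≥ rb / ((n0 : ℝ) * n1 * npod))
    (hvg : vg ≤ (1 / ((n1 : ℝ) * n2 * npod)) *
        (((n0 : ℝ) * ((npod : ℝ) - 1)) / ((n0 : ℝ) * npod - 1)) *
        ((4 - (k : ℝ) / n0) * rg + ((k : ℝ) / n0) * rb))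
    (hsnr : rb ≥ ((n0 : ℝ) * (4 * (n0 : ℝ) - k) * ((npod : ℝ) - 1)) /
        ((n2 : ℝ) * ((n0 : ℝ) * npod - 1) - (n0 : ℝ) * ((npod : ℝ) - 1) * k) * rg) :
    vb ≥ vg :=
  snr_implies_ranking_general n0 n1 n2 npod k h0 h1 h2 hp rb rg vb vg hk hvb hvg hsnr
end

section
/- If p_g ≤ (1 - (1-p_b)^{c_l}) / (α c_u) for α > 0, per-packet drop rates p_b, p_g ∈ [0,1], and packet-count bounds c_l ≤ c ≤ c_u for every connection, then the retransmission probabilities r_b = 1-(1-p_b)^{c} (for a bad link) and r_g = 1-(1-p_g)^{c'} (for a good link, c_l ≤ c' ≤ c_u) satisfy r_b ≥ α r_g. -/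
section RetransmissionProbability

variable {R : Type*} [Ring R] [LinearOrder R] [IsStrictOrderedRing R] {p : R}

theorem monotone_one_sub_one_sub_pow (hp₀ : 0 ≤ p) (hp₁ : p ≤ 1) :
    Monotone fun n : ℕ ↦ 1 - (1 - p) ^ n := fun _ _ hmn ↦
  sub_le_sub_left (pow_le_pow_of_le_one (sub_nonneg.mpr hp₁) (sub_le_self 1 hp₀) hmn) 1

theorem one_sub_one_sub_pow_le_mul (hp : p ≤ 2) (n : ℕ) : 1 - (1 - p) ^ n ≤ n * p := by
  have := one_add_mul_le_pow (a := -p) (neg_le_neg hp) n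
  rw [← sub_eq_add_neg, mul_neg, ← sub_eq_add_neg] at this
  exact sub_le_comm.mp this

end RetransmissionProbability

theorem drop_rate_condition_implies_snr_general
    (pb pg α : ℝ) (hα : 0 < α)
    (hpb0 : 0 ≤ pb) (hpb1 : pb ≤ 1) (hpg0 : 0 ≤ pg) (hpg1 : pg ≤ 1)
    (cl cu c c' : ℕ) (hcl : 0 < cl)
    (hc1 : cl ≤ c) (hc'1 : cl ≤ c') (hc'2 : c' ≤ cu)
    (hpg : pg ≤ (1 - (1 - pb) ^ cl) / (α * (cu : ℝ))) :
    1 - (1 - pb) ^ c ≥ α * (1 - (1 - pg) ^ c') := by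
  have hcu : 0 < (cu : ℝ) := by exact_mod_cast hcl.trans_le (hc'1.trans hc'2)
  have hrg : 1 - (1 - pg) ^ c' ≤ cu * pg :=
    (one_sub_one_sub_pow_le_mul (by linarith) c').trans (by gcongr)
  rw [le_div_iff₀ (by positivity), mul_comm, mul_assoc] at hpg
  calc α * (1 - (1 - pg) ^ c') ≤ α * (cu * pg) := by gcongr
    _ ≤ 1 - (1 - pb) ^ cl := hpg
    _ ≤ 1 - (1 - pb) ^ c := monotone_one_sub_one_sub_pow hpb0 hpb1 hc1

/-- If `pg ≤ (1 - (1-pb)^cl) / (α * cu)` with `α > 0`, and every connection has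
between `cl` and `cu` packets, then the retransmission probabilities
`rb = 1-(1-pb)^c` (bad link, `cl ≤ c ≤ cu`) and `rg = 1-(1-pg)^c'`
(good link, `cl ≤ c' ≤ cu`) satisfy `rb ≥ α * rg`. -/
theorem drop_rate_condition_implies_snr
    (pb pg α : ℝ) (hα : 0 < α)
    (hpb0 : 0 ≤ pb) (hpb1 : pb ≤ 1) (hpg0 : 0 ≤ pg) (hpg1 : pg ≤ 1)
    (cl cu c c' : ℕ) (hcl : 0 < cl)
    (hc1 : cl ≤ c) (hc2 : c ≤ cu) (hc'1 : cl ≤ c') (hc'2 : c' ≤ cu)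
    (hpg : pg ≤ (1 - (1 - pb) ^ cl) / (α * (cu : ℝ))) :
    1 - (1 - pb) ^ c ≥ α * (1 - (1 - pg) ^ c') :=
  drop_rate_condition_implies_snr_general pb pg α hα hpb0 hpb1 hpg0 hpg1 cl cu c c' hcl hc1 hc'1
    hc'2 hpg
end
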